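/- arXiv:1011.5648 — 2 statements merged into one kernel-verified Lean document; each statement's English description precedes it below -/
import Mathlib

section
/- Let n ∈ ℕ, A, V ∈ ℂ^{n×n} with V invertible, ρ ∈ L¹(ℝ) ∩ L^∞(ℝ) nonnegative, and s ∈ (0,1). Then for every λ > 0, ∫_ℝ |det(A + rV)|^{-s/n} ρ(r) dr ≤ |det V|^{-s/n} (λ^{-s} ‖ρ‖_{L¹} + 2λ^{1-s}/(1-s) ‖ρ‖_∞). -/
/-!
Over `ℂ`, `r ↦ det (A + r V) = det V · det (r + V⁻¹ A)` factors as `det V · ∏ⱼ (r - zⱼ)`, so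
`|det (A + r V)| ≥ |det V| ∏ⱼ |r - xⱼ|` with `xⱼ = Re zⱼ`. By AM-GM,
`∏ⱼ |r - xⱼ|^(-s/n) ≤ n⁻¹ ∑ⱼ |r - xⱼ|^(-s)`, which reduces the claim to one real root `x`.
There `|r - x|^(-s) ρ(r) ≤ λ^(-s) ρ(r)` away from `(x - λ, x + λ]`, while on that interval
`ρ ≤ ‖ρ‖_∞` and `∫ |r - x|^(-s) dr = 2 λ^(1-s) / (1 - s)`.
-/

open MeasureTheory Set Polynomial

theorem exists_det_add_smul_eq_det_mul_prod_sub {ι : Type*} [Fintype ι] [DecidableEq ι]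
    (A V : Matrix ι ι ℂ) (hV : IsUnit V.det) :
    ∃ z : ι → ℂ, ∀ r : ℂ, (A + r • V).det = V.det * ∏ i, (r - z i) := by
  classical
  set q := (-(V⁻¹ * A)).charpoly
  have hq := IsAlgClosed.splits q
  have hcard : Fintype.card ι = Fintype.card q.roots := by
    rw [Multiset.card_coe, ← hq.natDegree_eq_card_roots, Matrix.charpoly_natDegree_eq_dim]
  let e := Fintype.equivOfCardEq hcard
  refine ⟨fun i => (e i).1, fun r => ?_⟩
  have hfactor : A + r • V = V * (Matrix.scalar ι r - -(V⁻¹ * A)) := by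
    rw [sub_neg_eq_add, Matrix.mul_add, ← Matrix.mul_assoc, Matrix.mul_nonsing_inv V hV,
      Matrix.one_mul, Matrix.scalar_apply, ← Matrix.smul_one_eq_diagonal, Matrix.mul_smul,
      Matrix.mul_one, add_comm]
  have heval : q.eval r = ∏ w : q.roots, (r - w.1) := by
    conv_lhs => rw [hq.eq_prod_roots_of_monic (Matrix.charpoly_monic _)]
    rw [eval_multiset_prod, Multiset.map_map, ← Multiset.map_univ_comp_coe,
      ← Finset.prod_eq_multiset_prod]
    simp
  rw [hfactor, Matrix.det_mul, ← Matrix.eval_charpoly, heval, ← e.prod_comp]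

theorem exists_norm_det_mul_prod_abs_sub_le_norm_det_add_smul {ι : Type*} [Fintype ι]
    [DecidableEq ι] (A V : Matrix ι ι ℂ) (hV : IsUnit V.det) :
    ∃ x : ι → ℝ, ∀ r : ℝ, ‖V.det‖ * ∏ i, |r - x i| ≤ ‖(A + (r : ℂ) • V).det‖ := by
  obtain ⟨z, hz⟩ := exists_det_add_smul_eq_det_mul_prod_sub A V hV
  refine ⟨fun i => (z i).re, fun r => ?_⟩
  rw [hz, norm_mul, norm_prod]
  gcongr with i
  calc |r - (z i).re| = |((r : ℂ) - z i).re| := by simp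
    _ ≤ ‖(r : ℂ) - z i‖ := Complex.abs_re_le_norm _

theorem prod_rpow_inv_card_le_inv_card_mul_sum {ι : Type*} [Fintype ι] [Nonempty ι]
    (a : ι → ℝ) (ha : ∀ i, 0 ≤ a i) :
    ∏ i, a i ^ (Fintype.card ι : ℝ)⁻¹ ≤ (Fintype.card ι : ℝ)⁻¹ * ∑ i, a i := by
  rw [Finset.mul_sum]
  refine Real.geom_mean_le_arith_mean_weighted _ _ _ (fun _ _ => by positivity) ?_
    (fun i _ => ha i)
  simp [Finset.card_univ]

-- `hr` is needed since `0 ^ (-s) = 0` in Lean: the bound fails at the points `x i`.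
theorem rpow_neg_div_card_le_of_mul_prod_abs_sub_le {ι : Type*} [Fintype ι] [Nonempty ι]
    {c D s r : ℝ} {x : ι → ℝ} (hc : 0 < c) (hs : 0 ≤ s) (hr : ∀ i, r ≠ x i)
    (hD : c * ∏ i, |r - x i| ≤ D) :
    D ^ (-(s / Fintype.card ι)) ≤
      c ^ (-(s / Fintype.card ι)) * ((Fintype.card ι : ℝ)⁻¹ * ∑ i, |r - x i| ^ (-s)) := by
  have hprod : 0 < ∏ i, |r - x i| :=
    Finset.prod_pos fun i _ => abs_pos.mpr (sub_ne_zero.mpr (hr i))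
  calc D ^ (-(s / Fintype.card ι))
      ≤ (c * ∏ i, |r - x i|) ^ (-(s / Fintype.card ι)) :=
        Real.rpow_le_rpow_of_nonpos (mul_pos hc hprod) hD (neg_nonpos.mpr (by positivity))
    _ = c ^ (-(s / Fintype.card ι)) * ∏ i, (|r - x i| ^ (-s)) ^ (Fintype.card ι : ℝ)⁻¹ := by
        rw [Real.mul_rpow hc.le hprod.le, ← Real.finsetProd_rpow _ _ fun i _ => abs_nonneg _]
        congr! 2 with i
        rw [← Real.rpow_mul (abs_nonneg _), div_eq_mul_inv, neg_mul]
    _ ≤ _ := by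
        gcongr
        exact prod_rpow_inv_card_le_inv_card_mul_sum _ fun i => by positivity

theorem intervalIntegrable_abs_sub_rpow {p : ℝ} (hp : -1 < p) (x : ℝ) {a : ℝ} (ha : 0 ≤ a) :
    IntervalIntegrable (fun r => |r - x| ^ p) volume (x - a) (x + a) := by
  have hbase : IntervalIntegrable (fun t : ℝ => t ^ p) volume 0 a :=
    intervalIntegral.intervalIntegrable_rpow' hp
  have hleft : IntervalIntegrable (fun r => |r - x| ^ p) volume (x - a) x := by
    have h := (hbase.comp_sub_left x).symm
    rw [sub_zero] at h
    refine h.congr fun r hr => ?_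
    rw [uIoc_of_le (by linarith)] at hr
    simp only [abs_sub_comm r, abs_of_nonneg (sub_nonneg.mpr hr.2)]
  have hright : IntervalIntegrable (fun r => |r - x| ^ p) volume x (x + a) := by
    have h := hbase.comp_sub_right x
    rw [zero_add, add_comm a] at h
    refine h.congr fun r hr => ?_
    rw [uIoc_of_le (by linarith)] at hr
    simp only [abs_of_nonneg (sub_nonneg.mpr hr.1.le)]
  exact hleft.trans hright

theorem integral_abs_sub_rpow {p : ℝ} (hp : -1 < p) (x : ℝ) {a : ℝ} (ha : 0 ≤ a) :
    ∫ r in (x - a)..(x + a), |r - x| ^ p = 2 * a ^ (p + 1) / (p + 1) := by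
  have hbase : ∫ t in (0 : ℝ)..a, t ^ p = a ^ (p + 1) / (p + 1) := by
    rw [integral_rpow (Or.inl hp), Real.zero_rpow (by linarith), sub_zero]
  have hleft : ∫ r in (x - a)..x, |r - x| ^ p = a ^ (p + 1) / (p + 1) := by
    rw [intervalIntegral.integral_congr (g := fun r => (x - r) ^ p) fun r hr => ?_,
      intervalIntegral.integral_comp_sub_left (fun t => t ^ p), sub_self, sub_sub_cancel, hbase]
    rw [uIcc_of_le (by linarith)] at hr
    simp only [abs_sub_comm r, abs_of_nonneg (sub_nonneg.mpr hr.2)]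
  have hright : ∫ r in x..(x + a), |r - x| ^ p = a ^ (p + 1) / (p + 1) := by
    rw [intervalIntegral.integral_congr (g := fun r => (r - x) ^ p) fun r hr => ?_,
      intervalIntegral.integral_comp_sub_right (fun t => t ^ p), sub_self, add_sub_cancel_left,
      hbase]
    rw [uIcc_of_le (by linarith)] at hr
    simp only [abs_of_nonneg (sub_nonneg.mpr hr.1)]
  have hx : x ∈ uIcc (x - a) (x + a) := by
    rw [uIcc_of_le (by linarith)]
    constructor <;> linarith
  have hint := intervalIntegrable_abs_sub_rpow hp x ha
  rw [← intervalIntegral.integral_add_adjacent_intervals (hint.mono_set (uIcc_subset_uIcc_left hx))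
    (hint.mono_set (uIcc_subset_uIcc_right hx)), hleft, hright]
  ring

theorem abs_sub_rpow_neg_mul_le {s lam C x r y : ℝ} (hs : 0 ≤ s) (hlam : 0 < lam)
    (hy : 0 ≤ y) (hyC : y ≤ C) :
    |r - x| ^ (-s) * y ≤
      lam ^ (-s) * y + C * (Ioc (x - lam) (x + lam)).indicator (fun r => |r - x| ^ (-s)) r := by
  by_cases hr : r ∈ Ioc (x - lam) (x + lam)
  · rw [indicator_of_mem hr, mul_comm C]
    calc |r - x| ^ (-s) * y ≤ |r - x| ^ (-s) * C := by gcongr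
      _ ≤ lam ^ (-s) * y + |r - x| ^ (-s) * C := le_add_of_nonneg_left (by positivity)
  · have hfar : lam ≤ |r - x| := by
      rw [mem_Ioc, not_and_or, not_lt, not_le] at hr
      rw [le_abs]
      rcases hr with hr | hr
      · right; linarith
      · left; linarith
    rw [indicator_of_notMem hr, mul_zero, add_zero]
    exact mul_le_mul_of_nonneg_right (Real.rpow_le_rpow_of_nonpos hlam hfar (neg_nonpos.mpr hs)) hy

theorem integrable_indicator_Ioc_abs_sub_rpow_neg {s : ℝ} (hs : s < 1) (x : ℝ) {lam : ℝ}
    (hlam : 0 ≤ lam) :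
    Integrable ((Ioc (x - lam) (x + lam)).indicator fun r => |r - x| ^ (-s)) :=
  (integrable_indicator_iff measurableSet_Ioc).2 <|
    (intervalIntegrable_iff_integrableOn_Ioc_of_le (by linarith)).1 <|
      intervalIntegrable_abs_sub_rpow (by linarith) x hlam

theorem integrable_abs_sub_rpow_neg_mul {ρ : ℝ → ℝ} {C s lam : ℝ} (hρ : Integrable ρ)
    (hρ0 : ∀ r, 0 ≤ ρ r) (hρC : ∀ᵐ r, ρ r ≤ C) (hs : s ∈ Ioo (0 : ℝ) 1) (hlam : 0 < lam)
    (x : ℝ) : Integrable fun r => |r - x| ^ (-s) * ρ r := by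
  have hmeas : AEStronglyMeasurable fun r => |r - x| ^ (-s) * ρ r :=
    (by fun_prop : Measurable fun r => |r - x| ^ (-s)).aestronglyMeasurable.mul
      hρ.aestronglyMeasurable
  refine ((hρ.const_mul (lam ^ (-s))).add
    ((integrable_indicator_Ioc_abs_sub_rpow_neg hs.2 x hlam.le).const_mul C)).mono' hmeas ?_
  filter_upwards [hρC] with r hr
  rw [Real.norm_of_nonneg (by have := hρ0 r; positivity)]
  exact abs_sub_rpow_neg_mul_le hs.1.le hlam (hρ0 r) hr

theorem integral_abs_sub_rpow_neg_mul_le {ρ : ℝ → ℝ} {C s lam : ℝ} (hρ : Integrable ρ)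
    (hρ0 : ∀ r, 0 ≤ ρ r) (hρC : ∀ᵐ r, ρ r ≤ C) (hs : s ∈ Ioo (0 : ℝ) 1) (hlam : 0 < lam)
    (x : ℝ) :
    ∫ r, |r - x| ^ (-s) * ρ r ≤ lam ^ (-s) * (∫ r, ρ r) + 2 * lam ^ (1 - s) / (1 - s) * C := by
  have hind := integrable_indicator_Ioc_abs_sub_rpow_neg hs.2 x hlam.le
  calc ∫ r, |r - x| ^ (-s) * ρ r
      ≤ ∫ r, lam ^ (-s) * ρ r
          + C * (Ioc (x - lam) (x + lam)).indicator (fun r => |r - x| ^ (-s)) r := by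
        refine integral_mono_ae (integrable_abs_sub_rpow_neg_mul hρ hρ0 hρC hs hlam x)
          ((hρ.const_mul _).add (hind.const_mul C)) ?_
        filter_upwards [hρC] with r hr
        exact abs_sub_rpow_neg_mul_le hs.1.le hlam (hρ0 r) hr
    _ = lam ^ (-s) * (∫ r, ρ r) + C * ∫ r in (x - lam)..(x + lam), |r - x| ^ (-s) := by
        rw [integral_add (hρ.const_mul _) (hind.const_mul C), integral_const_mul,
          integral_const_mul, integral_indicator measurableSet_Ioc,
          intervalIntegral.integral_of_le (by linarith)]
    _ = _ := by
        rw [integral_abs_sub_rpow (by linarith [hs.2]) x hlam.le, neg_add_eq_sub]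
        ring

theorem determinant_averaging_bound_general
    (n : ℕ) (hn : 0 < n) (A V : Matrix (Fin n) (Fin n) ℂ) (hV : IsUnit V.det)
    (ρ : ℝ → ℝ) (hρint : Integrable ρ)
    (hρnonneg : ∀ r, 0 ≤ ρ r) (Cinf : ℝ)
    (hCinf : ∀ᵐ r ∂(volume : Measure ℝ), ρ r ≤ Cinf)
    (s lam : ℝ) (hs : s ∈ Set.Ioo (0:ℝ) 1) (hlam : 0 < lam) :
    ∫ r : ℝ, ‖(A + (r : ℂ) • V).det‖ ^ (-(s / (n : ℝ))) * ρ r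
      ≤ ‖V.det‖ ^ (-(s / (n : ℝ))) *
        (lam ^ (-s) * (∫ r : ℝ, ρ r) + 2 * lam ^ (1 - s) / (1 - s) * Cinf) := by
  have : Nonempty (Fin n) := Fin.pos_iff_nonempty.mp hn
  obtain ⟨x, hx⟩ := exists_norm_det_mul_prod_abs_sub_le_norm_det_add_smul A V hV
  have hkernel j := integrable_abs_sub_rpow_neg_mul hρint hρnonneg hCinf hs hlam (x j)
  have hbound : ∀ᵐ r : ℝ, ‖(A + (r : ℂ) • V).det‖ ^ (-(s / (n : ℝ))) * ρ r ≤
      ‖V.det‖ ^ (-(s / (n : ℝ))) * ((n : ℝ)⁻¹ * ∑ j, |r - x j| ^ (-s) * ρ r) := by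
    filter_upwards [ae_all_iff.2 fun j => Measure.ae_ne volume (x j)] with r hr
    have := rpow_neg_div_card_le_of_mul_prod_abs_sub_le (norm_pos_iff.mpr hV.ne_zero) hs.1.le hr
      (hx r)
    rw [Fintype.card_fin] at this
    refine (mul_le_mul_of_nonneg_right this (hρnonneg r)).trans_eq ?_
    rw [← Finset.sum_mul]
    ring
  calc _ ≤ ∫ r, ‖V.det‖ ^ (-(s / (n : ℝ))) * ((n : ℝ)⁻¹ * ∑ j, |r - x j| ^ (-s) * ρ r) :=
        integral_mono_of_nonneg (.of_forall fun r => by have := hρnonneg r; positivity)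
          (((integrable_finsetSum _ fun j _ => hkernel j).const_mul _).const_mul _) hbound
    _ = ‖V.det‖ ^ (-(s / (n : ℝ))) * ((n : ℝ)⁻¹ * ∑ j, ∫ r, |r - x j| ^ (-s) * ρ r) := by
        rw [integral_const_mul, integral_const_mul, integral_finsetSum _ fun j _ => hkernel j]
    _ ≤ ‖V.det‖ ^ (-(s / (n : ℝ))) * ((n : ℝ)⁻¹ * ∑ _j : Fin n,
          (lam ^ (-s) * (∫ r : ℝ, ρ r) + 2 * lam ^ (1 - s) / (1 - s) * Cinf)) := by
        gcongr with j
        exact integral_abs_sub_rpow_neg_mul_le hρint hρnonneg hCinf hs hlam (x j)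
    _ = _ := by
        rw [Finset.sum_const, Finset.card_univ, Fintype.card_fin, nsmul_eq_mul,
          inv_mul_cancel_left₀ (by positivity)]

theorem determinant_averaging_bound
    (n : ℕ) (hn : 0 < n) (A V : Matrix (Fin n) (Fin n) ℂ) (hV : IsUnit V.det)
    (ρ : ℝ → ℝ) (hρmeas : Measurable ρ) (hρint : Integrable ρ)
    (hρnonneg : ∀ r, 0 ≤ ρ r) (Cinf : ℝ)
    (hCinf : ∀ᵐ r ∂(volume : Measure ℝ), ρ r ≤ Cinf)
    (s lam : ℝ) (hs : s ∈ Set.Ioo (0:ℝ) 1) (hlam : 0 < lam) :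
    ∫ r : ℝ, ‖(A + (r : ℂ) • V).det‖ ^ (-(s / (n : ℝ))) * ρ r
      ≤ ‖V.det‖ ^ (-(s / (n : ℝ))) *
        (lam ^ (-s) * (∫ r : ℝ, ρ r) + 2 * lam ^ (1 - s) / (1 - s) * Cinf) :=
  determinant_averaging_bound_general n hn A V hV ρ hρint hρnonneg Cinf hCinf s lam hs hlam
end

section
/- Let u : ℤ^d → ℝ have finite support Θ with 0 ∈ Θ, and suppose ū := ∑_{k∈ℤ^d} u(k) > 0. Let n := max_{i,j∈Θ}|i-j|₁, c := (1/n)·ln(1 + ū/(2‖u‖_{ℓ¹})), and for fixed x, y ∈ ℤ^d, α(k) := (1/2)(e^{-c|k-x|₁} + e^{-c|k-y|₁}). Define W(k) := ∑_{j∈ℤ^d} α(j) u(k-j). Then W(k) ≥ α(k)·ū/2 > 0 for all k ∈ ℤ^d; in particular W(k) ≥ ū/4 for k ∈ {x,y}. -/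
/-! Write `W k = α k * ū + ∑ m, (α (k - m) - α k) * u m`. Since `0 ∈ Θ`, every `m ∈ Θ` has
`|m|₁ ≤ n`, so moving the argument of either exponential in `α` by `m` changes it by a factor
within `e^{± c n}`; hence `|α (k - m) - α k| ≤ α k (e^{c n} - 1)`. The choice of `c` is exactly
`(e^{c n} - 1) ‖u‖₁ = ū / 2`, so the error sum is at most `α k * ū / 2`. -/

noncomputable def alphaWt (d : ℕ) (c : ℝ) (x y : Fin d → ℤ) (k : Fin d → ℤ) : ℝ :=
  (1 / 2) * (Real.exp (-c * ((∑ i, |k i - x i| : ℤ) : ℝ))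
    + Real.exp (-c * ((∑ i, |k i - y i| : ℤ) : ℝ)))

open Finset Function

lemma Real.abs_exp_sub_one_le_exp_abs_sub_one (r : ℝ) : |Real.exp r - 1| ≤ Real.exp |r| - 1 := by
  rcases le_total 0 r with hr | hr
  · rw [abs_of_nonneg hr, abs_of_nonneg (by linarith [Real.add_one_le_exp r])]
  · rw [abs_of_nonpos hr, abs_of_nonpos (by linarith [Real.exp_le_one_iff.mpr hr])]
    linarith [Real.add_one_le_exp r, Real.add_one_le_exp (-r)]

lemma Real.abs_exp_sub_exp_le (s t : ℝ) :
    |Real.exp s - Real.exp t| ≤ Real.exp t * (Real.exp |s - t| - 1) := by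
  have hs : Real.exp s - Real.exp t = Real.exp t * (Real.exp (s - t) - 1) := by
    rw [mul_sub, ← Real.exp_add]; ring_nf
  rw [hs, abs_mul, abs_of_pos (Real.exp_pos t)]
  exact mul_le_mul_of_nonneg_left (Real.abs_exp_sub_one_le_exp_abs_sub_one _) (Real.exp_pos t).le

lemma abs_sum_abs_sub_sum_abs_le {ι α : Type*} [Fintype ι] [AddCommGroup α] [LinearOrder α]
    [IsOrderedAddMonoid α] (v w : ι → α) :
    |(∑ i, |v i|) - (∑ i, |w i|)| ≤ ∑ i, |v i - w i| := by
  rw [← sum_sub_distrib]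
  exact (abs_sum_le_sum_abs _ _).trans
    (sum_le_sum fun i _ => abs_abs_sub_abs_le_abs_sub (v i) (w i))

lemma abs_exp_neg_mul_sub_exp_neg_mul_le {c a b B : ℝ} (hc : 0 ≤ c) (hab : |a - b| ≤ B) :
    |Real.exp (-c * a) - Real.exp (-c * b)| ≤ Real.exp (-c * b) * (Real.exp (c * B) - 1) := by
  refine (Real.abs_exp_sub_exp_le _ _).trans (mul_le_mul_of_nonneg_left ?_ (Real.exp_pos _).le)
  rw [← mul_sub, neg_mul, abs_neg, abs_mul, abs_of_nonneg hc]
  gcongr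

section alphaWt

variable {d : ℕ} {c : ℝ} (x y : Fin d → ℤ)

lemma alphaWt_pos (k : Fin d → ℤ) : 0 < alphaWt d c x y k := by
  unfold alphaWt; positivity

lemma one_half_le_alphaWt_left : 1 / 2 ≤ alphaWt d c x y x := by
  simp only [alphaWt, sub_self, abs_zero, sum_const_zero, Int.cast_zero, mul_zero, Real.exp_zero]
  linarith [Real.exp_pos (-c * ((∑ i, |x i - y i| : ℤ) : ℝ))]

lemma one_half_le_alphaWt_right : 1 / 2 ≤ alphaWt d c x y y := by
  simp only [alphaWt, sub_self, abs_zero, sum_const_zero, Int.cast_zero, mul_zero, Real.exp_zero]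
  linarith [Real.exp_pos (-c * ((∑ i, |y i - x i| : ℤ) : ℝ))]

lemma abs_alphaWt_sub_sub_le (hc : 0 ≤ c) (k m : Fin d → ℤ) {B : ℝ}
    (hm : ((∑ t, |m t| : ℤ) : ℝ) ≤ B) :
    |alphaWt d c x y (k - m) - alphaWt d c x y k| ≤ alphaWt d c x y k * (Real.exp (c * B) - 1) := by
  have hdist : ∀ z : Fin d → ℤ,
      |((∑ i, |(k - m) i - z i| : ℤ) : ℝ) - ((∑ i, |k i - z i| : ℤ) : ℝ)| ≤ B := by
    intro z
    refine le_trans ?_ hm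
    rw [← Int.cast_sub, ← Int.cast_abs, Int.cast_le]
    refine (abs_sum_abs_sub_sum_abs_le _ _).trans_eq ?_
    simp [Pi.sub_apply, sub_sub_sub_cancel_right]
  have hx := abs_exp_neg_mul_sub_exp_neg_mul_le hc (hdist x)
  have hy := abs_exp_neg_mul_sub_exp_neg_mul_le hc (hdist y)
  unfold alphaWt
  rw [← mul_sub, abs_mul, abs_of_pos one_half_pos, mul_assoc, add_mul]
  gcongr
  rw [add_sub_add_comm]
  exact (abs_add_le _ _).trans (add_le_add hx hy)

end alphaWt

lemma le_sum_mul_of_abs_sub_le {ι : Type*} (s : Finset ι) {a ε : ℝ} {b : ι → ℝ} (u : ι → ℝ)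
    (hb : ∀ i ∈ s, |b i - a| ≤ ε) :
    a * ∑ i ∈ s, u i - ε * ∑ i ∈ s, |u i| ≤ ∑ i ∈ s, b i * u i := by
  rw [mul_sum, mul_sum, ← sum_sub_distrib]
  refine sum_le_sum fun i hi => ?_
  have herr : |(b i - a) * u i| ≤ ε * |u i| := by
    rw [abs_mul]; exact mul_le_mul_of_nonneg_right (hb i hi) (abs_nonneg _)
  linarith [neg_abs_le ((b i - a) * u i)]

lemma tsum_mul_apply_sub_eq_sum {G : Type*} [AddCommGroup G] (f u : G → ℝ) {s : Finset G}
    (hu : support u ⊆ s) (k : G) :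
    ∑' j, f j * u (k - j) = ∑ m ∈ s, f (k - m) * u m := by
  rw [← (Equiv.subLeft k).tsum_eq]
  simp only [Equiv.subLeft_apply, sub_sub_cancel]
  exact tsum_eq_sum' ((support_mul_subset_right _ _).trans hu)

lemma alphaWt_mul_half_le_sum {d : ℕ} {c : ℝ} (hc : 0 ≤ c) (x y : Fin d → ℤ)
    (s : Finset (Fin d → ℤ)) (u : (Fin d → ℤ) → ℝ) {n : ℝ}
    (hs : ∀ m ∈ s, ((∑ t, |m t| : ℤ) : ℝ) ≤ n)
    (hcn : (Real.exp (c * n) - 1) * ∑ m ∈ s, |u m| = (∑ m ∈ s, u m) / 2) (k : Fin d → ℤ) :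
    alphaWt d c x y k * ((∑ m ∈ s, u m) / 2) ≤ ∑ m ∈ s, alphaWt d c x y (k - m) * u m :=
  calc alphaWt d c x y k * ((∑ m ∈ s, u m) / 2)
      = alphaWt d c x y k * ∑ m ∈ s, u m
          - alphaWt d c x y k * (Real.exp (c * n) - 1) * ∑ m ∈ s, |u m| := by
        rw [mul_assoc, hcn]; ring
    _ ≤ ∑ m ∈ s, alphaWt d c x y (k - m) * u m :=
        le_sum_mul_of_abs_sub_le s u fun m hm => abs_alphaWt_sub_sub_le x y hc k m (hs m hm)

theorem smoothed_single_site_potential_positive_general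
    (d : ℕ) (u : (Fin d → ℤ) → ℝ) (hfin : (Function.support u).Finite)
    (h0 : u 0 ≠ 0) (hubar : 0 < ∑' k, u k)
    (n : ℕ) (hn0 : 0 < n)
    (hdiam : ∀ i j, u i ≠ 0 → u j ≠ 0 → (∑ t, |i t - j t| : ℤ) ≤ (n : ℤ))
    (x y : Fin d → ℤ) :
    (∀ k, alphaWt d ((1 / (n : ℝ)) * Real.log (1 + (∑' k, u k) / (2 * ∑' k, |u k|))) x y k
          * ((∑' k, u k) / 2)
        ≤ ∑' j, alphaWt d ((1 / (n : ℝ)) * Real.log (1 + (∑' k, u k) / (2 * ∑' k, |u k|))) x y j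
            * u (k - j)
      ∧ 0 < alphaWt d ((1 / (n : ℝ)) * Real.log (1 + (∑' k, u k) / (2 * ∑' k, |u k|))) x y k
          * ((∑' k, u k) / 2))
    ∧ (∀ k, k = x ∨ k = y →
        (∑' j, u j) / 4
          ≤ ∑' j, alphaWt d ((1 / (n : ℝ)) * Real.log (1 + (∑' k, u k) / (2 * ∑' k, |u k|))) x y j
              * u (k - j)) := by
  set s := hfin.toFinset
  have hsupp : support u ⊆ s := hfin.coe_toFinset.ge
  simp only [tsum_mul_apply_sub_eq_sum _ u hsupp, tsum_eq_sum' hsupp,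
    tsum_eq_sum' (f := fun k => |u k|) fun k hk => hsupp (abs_ne_zero.mp hk)] at hubar ⊢
  set U := ∑ m ∈ s, u m
  set S := ∑ m ∈ s, |u m|
  set c := (1 / (n : ℝ)) * Real.log (1 + U / (2 * S))
  have hS : 0 < S := hubar.trans_le ((le_abs_self U).trans (abs_sum_le_sum_abs u s))
  have hc : 0 ≤ c := mul_nonneg (by positivity) (Real.log_nonneg (le_add_of_nonneg_right (by positivity)))
  have hcn : (Real.exp (c * n) - 1) * S = U / 2 := by
    have hlog : c * n = Real.log (1 + U / (2 * S)) := by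
      simp only [c]; field_simp
    rw [hlog, Real.exp_log (by positivity)]
    field_simp; ring
  have hs : ∀ m ∈ s, ((∑ t, |m t| : ℤ) : ℝ) ≤ n := fun m hm => by
    exact_mod_cast by simpa using hdiam m 0 (by simpa [s] using hm) h0
  have hW := alphaWt_mul_half_le_sum hc x y s u hs hcn
  refine ⟨fun k => ⟨hW k, mul_pos (alphaWt_pos x y k) (half_pos hubar)⟩, ?_⟩
  have hquarter : ∀ k, 1 / 2 ≤ alphaWt d c x y k → U / 4 ≤ ∑ m ∈ s, alphaWt d c x y (k - m) * u m :=
    fun k hk => le_trans (by linarith [mul_le_mul_of_nonneg_right hk (half_pos hubar).le]) (hW k)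
  rintro k (rfl | rfl)
  · exact hquarter _ (one_half_le_alphaWt_left _ y)
  · exact hquarter _ (one_half_le_alphaWt_right x _)

theorem smoothed_single_site_potential_positive
    (d : ℕ) (u : (Fin d → ℤ) → ℝ) (hfin : (Function.support u).Finite)
    (h0 : u 0 ≠ 0) (hubar : 0 < ∑' k, u k)
    (n : ℕ) (hn0 : 0 < n)
    (hdiam : ∀ i j, u i ≠ 0 → u j ≠ 0 → (∑ t, |i t - j t| : ℤ) ≤ (n : ℤ))
    (hdiam_max : ∃ i j, u i ≠ 0 ∧ u j ≠ 0 ∧ (∑ t, |i t - j t| : ℤ) = (n : ℤ))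
    (x y : Fin d → ℤ) :
    (∀ k, alphaWt d ((1 / (n : ℝ)) * Real.log (1 + (∑' k, u k) / (2 * ∑' k, |u k|))) x y k
          * ((∑' k, u k) / 2)
        ≤ ∑' j, alphaWt d ((1 / (n : ℝ)) * Real.log (1 + (∑' k, u k) / (2 * ∑' k, |u k|))) x y j
            * u (k - j)
      ∧ 0 < alphaWt d ((1 / (n : ℝ)) * Real.log (1 + (∑' k, u k) / (2 * ∑' k, |u k|))) x y k
          * ((∑' k, u k) / 2))
    ∧ (∀ k, k = x ∨ k = y →
        (∑' j, u j) / 4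
          ≤ ∑' j, alphaWt d ((1 / (n : ℝ)) * Real.log (1 + (∑' k, u k) / (2 * ∑' k, |u k|))) x y j
              * u (k - j)) :=
  smoothed_single_site_potential_positive_general d u hfin h0 hubar n hn0 hdiam x y
end
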